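/- The group G35 defined by ⟨a, b, c | a⁴ = b⁴ = 1, [a,b] = 1, c² = a², cac⁻¹ = a⁻¹, cbc⁻¹ = b⁻¹⟩ has order 32 and is not isomorphic to the split extension G34 = (C₄ × C₄) ⋊ C₂ with C₂ acting by inversion. -/

import Mathlib

/-- The homomorphism `C₂ → Aut(N)` sending the nontrivial element of `C₂`
to the inversion automorphism of the abelian group `N`. -/
noncomputable def invAction (N : Type*) [CommGroup N] :
    Multiplicative (ZMod 2) →* MulAut N :=
  AddMonoidHom.toMultiplicativeLeft <|
    ZMod.lift 2 ⟨zmultiplesHom (Additive (MulAut N)) (Additive.ofMul (MulEquiv.inv N)), by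
      have h : (MulEquiv.inv N) * (MulEquiv.inv N) = 1 := by ext x; simp
      simp only [zmultiplesHom_apply]
      norm_num
      rw [two_zsmul, ← ofMul_mul, h, ofMul_one]⟩

/-- The cyclic group of order `n` (multiplicative). -/
abbrev Cyc (n : ℕ) := Multiplicative (ZMod n)

/-- The semidirect product `(C₄ × C₄) ⋊ C₂`, where the nontrivial element of `C₂`
acts by inverting both factors: the group `G34`. -/
noncomputable abbrev G34 : Type := (Cyc 4 × Cyc 4) ⋊[invAction (Cyc 4 × Cyc 4)] Cyc 2

/-- The relations of the presentation
`G35 = ⟨a, b, c | a⁴ = b⁴ = 1, [a,b] = 1, c² = a², cac⁻¹ = a⁻¹, cbc⁻¹ = b⁻¹⟩`,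
with `a, b, c` the generators `FreeGroup.of 0, 1, 2`. -/
def G35rels : Set (FreeGroup (Fin 3)) :=
  { (FreeGroup.of 0) ^ 4, (FreeGroup.of 1) ^ 4,
    FreeGroup.of 0 * FreeGroup.of 1 * (FreeGroup.of 0)⁻¹ * (FreeGroup.of 1)⁻¹,
    (FreeGroup.of 2) ^ 2 * ((FreeGroup.of 0) ^ 2)⁻¹,
    FreeGroup.of 2 * FreeGroup.of 0 * (FreeGroup.of 2)⁻¹ * FreeGroup.of 0,
    FreeGroup.of 2 * FreeGroup.of 1 * (FreeGroup.of 2)⁻¹ * FreeGroup.of 1 }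

/-!
Every element of `G35` has a normal form `aⁱ bʲ cᵏ` with `i, j ∈ ZMod 4` and `k ∈ ZMod 2`.
The relations dictate how normal forms multiply: `cᵏ` inverts the exponents it passes, and
`c · c = a²` contributes a cocycle. Conversely this rule defines a group of order 32 in which
`(1,0,0), (0,1,0), (0,0,1)` satisfy the relations, and the two induced homomorphisms are mutually
inverse, so `|G35| = 32`. In that group every element `x` with `x² = 1` lies in `⟨a², b²⟩`, which
is central, whereas in `G34` the generator of `C₂` is an involution not commuting with `C₄ × C₄`.
-/

section ZModPow

variable {G : Type*} {n : ℕ} [NeZero n] {x : G}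

lemma pow_zmod_val_add [Monoid G] (hx : x ^ n = 1) (i j : ZMod n) :
    x ^ (i + j).val = x ^ i.val * x ^ j.val := by
  rw [ZMod.val_add, ← pow_eq_pow_mod _ hx, pow_add]

lemma pow_zmod_val_neg [Group G] (hx : x ^ n = 1) (i : ZMod n) :
    x ^ (-i).val = (x ^ i.val)⁻¹ :=
  eq_inv_of_mul_eq_one_left <| by
    rw [← pow_zmod_val_add hx, neg_add_cancel, ZMod.val_zero, pow_zero]

end ZModPow

lemma ZMod.eq_zero_or_eq_one (k : ZMod 2) : k = 0 ∨ k = 1 := by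
  decide +revert

/-- `⟨i, j, k⟩` stands for `aⁱ bʲ cᵏ`. -/
@[ext]
structure G35Model where
  i : ZMod 4
  j : ZMod 4
  k : ZMod 2
deriving DecidableEq, Fintype

namespace G35Model

def twist (k : ZMod 2) (x : ZMod 4) : ZMod 4 := if k = 1 then -x else x

/-- `cᵏ cᵏ' = a ^ cocycle k k' * c ^ (k + k')`, because `c² = a²`. -/
def cocycle (k k' : ZMod 2) : ZMod 4 := if k = 1 ∧ k' = 1 then 2 else 0

lemma twist_add (k : ZMod 2) (x y : ZMod 4) : twist k (x + y) = twist k x + twist k y := by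
  decide +revert

lemma twist_twist (k k' : ZMod 2) (x : ZMod 4) : twist k (twist k' x) = twist (k + k') x := by
  decide +revert

lemma cocycle_add_cocycle (k₁ k₂ k₃ : ZMod 2) :
    cocycle k₁ k₂ + cocycle (k₁ + k₂) k₃ = twist k₁ (cocycle k₂ k₃) + cocycle k₁ (k₂ + k₃) := by
  decide +revert

instance : Mul G35Model :=
  ⟨fun m m' => ⟨m.i + twist m.k m'.i + cocycle m.k m'.k, m.j + twist m.k m'.j, m.k + m'.k⟩⟩

lemma mul_def (m m' : G35Model) :
    m * m' = ⟨m.i + twist m.k m'.i + cocycle m.k m'.k, m.j + twist m.k m'.j, m.k + m'.k⟩ :=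
  rfl

instance : One G35Model := ⟨⟨0, 0, 0⟩⟩

lemma one_def : (1 : G35Model) = ⟨0, 0, 0⟩ :=
  rfl

instance : Inv G35Model := ⟨fun m => ⟨twist m.k (-m.i) + cocycle m.k m.k, twist m.k (-m.j), m.k⟩⟩

instance : Group G35Model :=
  Group.ofLeftAxioms
    (by
      intro x y z
      ext <;> simp only [mul_def, twist_add, twist_twist]
      · linear_combination cocycle_add_cocycle x.k y.k z.k
      · ring
      · ring)
    (by decide) (by decide)

lemma card : Nat.card G35Model = 32 := by
  rw [Nat.card_eq_fintype_card]
  rfl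

lemma commute_of_mul_self_eq_one : ∀ x y : G35Model, x * x = 1 → Commute x y := by
  unfold Commute SemiconjBy
  decide

end G35Model

structure IsG35Triple {G : Type*} [Group G] (a b c : G) : Prop where
  a_pow_four : a ^ 4 = 1
  b_pow_four : b ^ 4 = 1
  commute : Commute a b
  c_sq : c ^ 2 = a ^ 2
  semiconj_a : SemiconjBy c a a⁻¹
  semiconj_b : SemiconjBy c b b⁻¹

lemma pow_mul_pow_twist {G : Type*} [Group G] {c x : G} (hx : x ^ 4 = 1)
    (hc : SemiconjBy c x x⁻¹) (k : ZMod 2) (i : ZMod 4) :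
    c ^ k.val * x ^ i.val = x ^ (G35Model.twist k i).val * c ^ k.val := by
  obtain rfl | rfl := k.eq_zero_or_eq_one
  · simp [G35Model.twist]
  · simpa [G35Model.twist, ZMod.val_one, pow_zmod_val_neg hx, inv_pow] using
      (hc.pow_right i.val).eq

namespace IsG35Triple

open G35Model

variable {G : Type*} [Group G] {a b c : G} (h : IsG35Triple a b c)
include h

lemma c_pow_mul_c_pow (k k' : ZMod 2) :
    c ^ k.val * c ^ k'.val = a ^ (cocycle k k').val * c ^ (k + k').val := by
  obtain rfl | rfl := k.eq_zero_or_eq_one <;> obtain rfl | rfl := k'.eq_zero_or_eq_one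
  · simp [cocycle]
  · simp [cocycle, ZMod.val_one]
  · simp [cocycle, ZMod.val_one]
  · change c ^ 1 * c ^ 1 = a ^ 2 * c ^ 0
    rw [← pow_add, h.c_sq, pow_zero, mul_one]

def lift : G35Model →* G where
  toFun m := a ^ m.i.val * b ^ m.j.val * c ^ m.k.val
  map_one' := by simp [G35Model.one_def]
  map_mul' m m' := by
    have hba (p q : ℕ) (x : G) : b ^ p * (a ^ q * x) = a ^ q * (b ^ p * x) :=
      ((h.commute.pow_pow q p).left_comm x).symm
    simp only [G35Model.mul_def, pow_zmod_val_add h.a_pow_four, pow_zmod_val_add h.b_pow_four,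
      mul_assoc]
    rw [← mul_assoc (c ^ _) (a ^ _), pow_mul_pow_twist h.a_pow_four h.semiconj_a, mul_assoc,
      ← mul_assoc (c ^ _) (b ^ _), pow_mul_pow_twist h.b_pow_four h.semiconj_b, mul_assoc,
      h.c_pow_mul_c_pow]
    simp only [hba]

end IsG35Triple

namespace G35Model

def gen : Fin 3 → G35Model := ![⟨1, 0, 0⟩, ⟨0, 1, 0⟩, ⟨0, 0, 1⟩]

lemma lift_gen_eq_one : ∀ r ∈ G35rels, FreeGroup.lift gen r = 1 := by
  simp only [G35rels, Set.mem_insert_iff, Set.mem_singleton_iff]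
  rintro r (rfl | rfl | rfl | rfl | rfl | rfl) <;>
    simp only [map_mul, map_pow, map_inv, FreeGroup.lift_apply_of] <;> decide

lemma isG35Triple_of :
    IsG35Triple (PresentedGroup.of (rels := G35rels) 0) (.of 1) (.of 2) where
  a_pow_four := PresentedGroup.one_of_mem (by simp [G35rels])
  b_pow_four := PresentedGroup.one_of_mem (by simp [G35rels])
  commute := PresentedGroup.mk_eq_mk_of_mul_inv_mem (by simp [G35rels, mul_assoc])
  c_sq := PresentedGroup.mk_eq_mk_of_mul_inv_mem (by simp [G35rels])
  semiconj_a := PresentedGroup.mk_eq_mk_of_mul_inv_mem (by simp [G35rels, mul_assoc])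
  semiconj_b := PresentedGroup.mk_eq_mk_of_mul_inv_mem (by simp [G35rels, mul_assoc])

def mulEquivPresentedGroup : G35Model ≃* PresentedGroup G35rels :=
  MonoidHom.toMulEquiv isG35Triple_of.lift (PresentedGroup.toGroup lift_gen_eq_one)
    (MonoidHom.ext fun m => by
      simp only [IsG35Triple.lift, MonoidHom.coe_comp, MonoidHom.coe_mk, OneHom.coe_mk,
        Function.comp_apply, map_mul, map_pow, PresentedGroup.toGroup.of, MonoidHom.id_apply]
      revert m
      decide)
    (PresentedGroup.ext fun x => by
      fin_cases x <;> simp [IsG35Triple.lift, gen, ZMod.val_one''])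

end G35Model

lemma invAction_ofAdd_one_apply (N : Type*) [CommGroup N] (n : N) :
    invAction N (Multiplicative.ofAdd 1) n = n⁻¹ :=
  rfl

open SemidirectProduct in
lemma G34.exists_noncentral_involution : ∃ x y : G34, x * x = 1 ∧ ¬Commute x y := by
  refine ⟨inr (.ofAdd 1), inl (.ofAdd 1, 1), by rw [← map_mul]; rfl, fun h => ?_⟩
  have h_left := congrArg left h.eq
  simp only [mul_left, left_inl, left_inr, right_inr, invAction_ofAdd_one_apply] at h_left
  exact absurd h_left (by decide)

/-- The group `G35` defined by
`⟨a, b, c | a⁴ = b⁴ = 1, [a,b] = 1, c² = a², cac⁻¹ = a⁻¹, cbc⁻¹ = b⁻¹⟩`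
has order 32 and is not isomorphic to the split extension
`G34 = (C₄ × C₄) ⋊ C₂` with `C₂` acting by inversion. -/
theorem G35_card_and_not_iso_G34 :
    Nat.card (PresentedGroup G35rels) = 32 ∧
      IsEmpty (PresentedGroup G35rels ≃* G34) := by
  refine ⟨?_, ⟨fun f => ?_⟩⟩
  · rw [← Nat.card_congr G35Model.mulEquivPresentedGroup.toEquiv, G35Model.card]
  · let e := G35Model.mulEquivPresentedGroup.trans f
    obtain ⟨x, y, hx, hxy⟩ := G34.exists_noncentral_involution
    have h_comm := G35Model.commute_of_mul_self_eq_one (e.symm x) (e.symm y)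
      (by rw [← map_mul, hx, map_one])
    exact hxy (by simpa using h_comm.map e)
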